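/- arXiv:1805.00544 — 2 statements merged into one kernel-verified Lean document; each statement's English description precedes it below -/
import Mathlib

section
/- For an odd prime p, the Apéry-like number A((p-1)/2) = Σ_{k=0}^{(p-1)/2} C((p-1)/2, k)^2 · C((p-1)/2 + k, k)^2 is congruent modulo p^2 to the truncated hypergeometric sum Σ_{k=0}^{(p-1)/2} ((1/2)_k)^4 / (k!)^4, where the congruence is between rational numbers c_1 ≡ c_2 (mod p^2) meaning c_1 - c_2 ∈ p^2 ℤ_p. -/
/-!
Write p = 2m + 1 and compare the two sums term by term. Since
C(m,k)·C(m+k,k)·k!² = ∏_{j<k} (m - j)(m + 1 + j), we get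
C(m,k)·C(m+k,k)·4^k·k!² = ∏_{j<k} (p² - (2j+1)²) =: P, while
(1/2)_k·2^k = ∏_{j<k} (2j+1) =: Q, so the k-th terms differ by (P² - Q⁴) / (16^k·k!⁴).
Modulo p² every factor of P is -(2j+1)², hence p² ∣ P² - Q⁴; the denominator is prime to p
because k < p and p is odd. The ultrametric inequality then bounds the whole difference by p⁻².
-/

open Finset Polynomial
open Nat

lemma ascPochhammer_eval_half_mul_two_pow {K : Type*} [Field K] [NeZero (2 : K)] (k : ℕ) :
    (ascPochhammer K k).eval (1 / 2 : K) * 2 ^ k = ∏ j ∈ range k, (2 * (j : K) + 1) := by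
  induction k with
  | zero => simp
  | succ k ih =>
    have half : (1 / 2 : K) * 2 = 1 := one_div_mul_cancel two_ne_zero
    rw [ascPochhammer_succ_eval, prod_range_succ, ← ih, pow_succ]
    linear_combination (ascPochhammer K k).eval (1 / 2 : K) * 2 ^ k * half

lemma choose_mul_choose_add_mul_factorial_sq (m k : ℕ) :
    m.choose k * (m + k).choose k * k ! ^ 2 = ∏ j ∈ range k, (m - j) * (m + 1 + j) := by
  rw [prod_mul_distrib, ← Nat.descFactorial_eq_prod_range, ← Nat.ascFactorial_eq_prod_range,
    Nat.descFactorial_eq_factorial_mul_choose, Nat.ascFactorial_eq_factorial_mul_choose]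
  ring

lemma choose_mul_choose_add_mul_eq_prod_sq_sub_sq {m k : ℕ} (hk : k ≤ m) :
    ((m.choose k * (m + k).choose k * (4 ^ k * k ! ^ 2) : ℕ) : ℤ) =
      ∏ j ∈ range k, ((2 * m + 1 : ℤ) ^ 2 - (2 * j + 1) ^ 2) := by
  rw [show m.choose k * (m + k).choose k * (4 ^ k * k ! ^ 2)
      = ∏ j ∈ range k, 4 * ((m - j) * (m + 1 + j)) by
    rw [prod_mul_distrib, prod_const, card_range, ← choose_mul_choose_add_mul_factorial_sq]; ring]
  push_cast
  refine prod_congr rfl fun j hj => ?_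
  rw [Nat.cast_sub (by grind)]
  ring

lemma Int.sq_prod_sub_modEq_sq_prod {ι : Type*} (n : ℤ) (s : Finset ι) (f : ι → ℤ) :
    (∏ i ∈ s, (n - f i)) ^ 2 ≡ (∏ i ∈ s, f i) ^ 2 [ZMOD n] := by
  have h : ∏ i ∈ s, (n - f i) ≡ ∏ i ∈ s, -f i [ZMOD n] :=
    Int.ModEq.prod fun i _ => Int.modEq_iff_dvd.mpr ⟨-1, by ring⟩
  simpa [prod_neg, mul_pow, ← pow_mul] using h.pow 2

lemma sq_dvd_sq_prod_sq_sub_odd_sq_sub_pow_four_prod_odd (n : ℤ) (k : ℕ) :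
    n ^ 2 ∣ (∏ j ∈ range k, (n ^ 2 - (2 * j + 1) ^ 2)) ^ 2 -
      (∏ j ∈ range k, (2 * (j : ℤ) + 1)) ^ 4 := by
  have h :=
    (Int.sq_prod_sub_modEq_sq_prod (n ^ 2) (range k) fun j => (2 * j + 1) ^ 2).symm.dvd
  rwa [prod_pow, ← pow_mul] at h

lemma Padic.norm_intCast_div_natCast_le {p : ℕ} [Fact p.Prime] {a : ℤ} {b n : ℕ}
    (ha : (p ^ n : ℤ) ∣ a) (hb : p.Coprime b) :
    ‖((a / b : ℚ) : ℚ_[p])‖ ≤ (p : ℝ) ^ (-n : ℤ) := by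
  push_cast
  rw [norm_div, norm_natCast_eq_one_iff.mpr hb, div_one]
  exact (norm_int_le_pow_iff_dvd a n).mpr ha

lemma Padic.exists_padicInt_mul_of_norm_le {p : ℕ} [Fact p.Prime] {x : ℚ_[p]} {n : ℕ}
    (hx : ‖x‖ ≤ (p : ℝ) ^ (-n : ℤ)) : ∃ t : ℤ_[p], x = (p : ℚ_[p]) ^ n * t := by
  have hp : (p : ℚ_[p]) ^ n ≠ 0 :=
    pow_ne_zero _ (Nat.cast_ne_zero.mpr (Fact.out : p.Prime).ne_zero)
  refine ⟨⟨x / (p : ℚ_[p]) ^ n, ?_⟩, (mul_div_cancel₀ x hp).symm⟩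
  rw [norm_div, div_le_one (norm_pos_iff.mpr hp), norm_pow, norm_p]
  simpa using hx

lemma choose_sq_mul_choose_add_sq_sub_pochhammer_half_eq {m k : ℕ} (hk : k ≤ m) :
    (m.choose k : ℚ) ^ 2 * ((m + k).choose k : ℚ) ^ 2 -
        (ascPochhammer ℚ k).eval (1 / 2) ^ 4 / (k ! : ℚ) ^ 4 =
      (((∏ j ∈ range k, ((2 * m + 1 : ℤ) ^ 2 - (2 * j + 1) ^ 2)) ^ 2 -
          (∏ j ∈ range k, (2 * (j : ℤ) + 1)) ^ 4 : ℤ) : ℚ) /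
        ((16 ^ k * k ! ^ 4 : ℕ) : ℚ) := by
  rw [← choose_mul_choose_add_mul_eq_prod_sq_sub_sq hk]
  push_cast
  rw [← ascPochhammer_eval_half_mul_two_pow]
  have h4 : ((4 : ℚ) ^ k) ^ 2 = 16 ^ k := by rw [← pow_mul, mul_comm, pow_mul]; norm_num
  have h2 : ((2 : ℚ) ^ k) ^ 4 = 16 ^ k := by rw [← pow_mul, mul_comm, pow_mul]; norm_num
  field_simp
  rw [h4, h2]
  ring

theorem apery_half_congruence (p : ℕ) [Fact p.Prime] (hp : Odd p) :
    ∃ t : ℤ_[p],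
      (((∑ k ∈ Finset.range ((p - 1) / 2 + 1),
            ((((p - 1) / 2).choose k : ℚ))^2 * ((((p - 1) / 2 + k).choose k : ℚ))^2) -
          ∑ k ∈ Finset.range ((p - 1) / 2 + 1),
            ((ascPochhammer ℚ k).eval (1 / 2 : ℚ))^4 / (k.factorial : ℚ)^4 : ℚ) : ℚ_[p]) =
        (p : ℚ_[p])^2 * (t : ℚ_[p]) := by
  have hprime : p.Prime := Fact.out
  obtain ⟨m, rfl⟩ := hp
  rw [show (2 * m + 1 - 1) / 2 = m by omega]
  apply Padic.exists_padicInt_mul_of_norm_le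
  rw [← sum_sub_distrib, Rat.cast_sum]
  refine IsUltrametricDist.norm_sum_le_of_forall_le_of_nonneg (by positivity) fun k hk => ?_
  have hkm : k ≤ m := Nat.lt_succ_iff.mp (mem_range.mp hk)
  rw [choose_sq_mul_choose_add_sq_sub_pochhammer_half_eq hkm]
  apply Padic.norm_intCast_div_natCast_le
  · exact_mod_cast sq_dvd_sq_prod_sq_sub_odd_sq_sub_pow_four_prod_odd (2 * m + 1) k
  · refine Nat.Coprime.mul_right (Nat.Coprime.pow_right _ ?_) (Nat.Coprime.pow_right _ ?_)
    · exact Nat.Coprime.pow_right 4 (by simp : (2 * m + 1).Coprime 2)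
    · exact hprime.coprime_factorial_of_lt (by omega)
end

section
/- For a prime p > 2 and a p-integral rational z, the congruence (−4/p) · Σ_{k=0}^{p-1} ((1/2)_k)^2/(k!)^2 · z^k ≡ Σ_{k=0}^{p-1} ((1/2)_k)^2/(k!)^2 · (1−z)^k (mod p) holds, where (−4/p) is the quadratic character modulo 4 evaluated at p (equal to (−1)^((p−1)/2)). -/
open Finset Polynomial

/-!
Write `p = 2m + 1`. Modulo `p` we have `1/2 ≡ -m`, so `(1/2)_k / k! ≡ (-1)^k C(m,k)` and
both sides reduce to values of `F(x) = ∑_{k ≤ m} C(m,k)^2 x^k`. Expanding `(1 - x)^k` and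
applying Vandermonde gives `F(1 - x) = ∑_j C(m,j) C(2m-j, m) (-x)^j`, and
`C(2m-j, m-j) ≡ (-1)^(m-j) C(m,j)` because `2m - j ≡ -(j + 1)`; hence
`F(1 - x) ≡ (-1)^m F(x)`. The rational identity is transported through `ℤ_[p]`, where the
coefficients are integral and reduction mod `p` is a ring homomorphism.
-/

/-- The form `(m - j).choose (m - k)`, rather than `(m - j).choose (k - j)`, keeps this true for
`k < j`, where truncated subtraction would otherwise break it. -/
theorem choose_mul_choose_eq_choose_mul_choose_sub {m k : ℕ} (j : ℕ) (hk : k ≤ m) :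
    m.choose k * k.choose j = m.choose j * (m - j).choose (m - k) := by
  rcases le_or_gt j k with hjk | hkj
  · rw [Nat.choose_mul hjk, Nat.choose_symm_of_eq_add (show m - j = (k - j) + (m - k) by omega)]
  rw [Nat.choose_eq_zero_of_lt hkj, mul_zero]
  rcases le_or_gt j m with hjm | hmj
  · rw [Nat.choose_eq_zero_of_lt (by omega : m - j < m - k), mul_zero]
  · rw [Nat.choose_eq_zero_of_lt hmj, zero_mul]

theorem sum_range_choose_mul_choose_sub (m n : ℕ) :
    ∑ k ∈ range (m + 1), m.choose k * n.choose (m - k) = (m + n).choose m := by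
  rw [Nat.add_choose_eq, Nat.sum_antidiagonal_eq_sum_range_succ_mk]

theorem sum_range_choose_sq_mul_choose (m j : ℕ) :
    ∑ k ∈ range (m + 1), m.choose k ^ 2 * k.choose j = m.choose j * (m + (m - j)).choose m := by
  calc ∑ k ∈ range (m + 1), m.choose k ^ 2 * k.choose j
      = ∑ k ∈ range (m + 1), m.choose j * (m.choose k * (m - j).choose (m - k)) := by
        refine sum_congr rfl fun k hk => ?_
        rw [sq, mul_assoc, choose_mul_choose_eq_choose_mul_choose_sub j
          (Nat.lt_succ_iff.mp (mem_range.mp hk))]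
        ring
    _ = m.choose j * (m + (m - j)).choose m := by
        rw [← mul_sum, sum_range_choose_mul_choose_sub]

theorem sum_range_choose_mul_eq_of_lt {R : Type*} [NonAssocSemiring R] (f : ℕ → R) {k n : ℕ}
    (h : k < n) :
    ∑ j ∈ range n, (k.choose j : R) * f j =
      ∑ j ∈ range (k + 1), (k.choose j : R) * f j := by
  refine (sum_subset (range_subset_range.mpr h) fun j _ hj => ?_).symm
  rw [Nat.choose_eq_zero_of_lt (by simpa using hj), Nat.cast_zero, zero_mul]

theorem sum_range_choose_sq_mul_one_sub_pow {R : Type*} [CommRing R] (m : ℕ) (x : R) :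
    ∑ k ∈ range (m + 1), (m.choose k : R) ^ 2 * (1 - x) ^ k =
      ∑ j ∈ range (m + 1), (m.choose j : R) * ((m + (m - j)).choose m : R) * (-x) ^ j := by
  have expand (k : ℕ) (hk : k ∈ range (m + 1)) :
      (1 - x) ^ k = ∑ j ∈ range (m + 1), (k.choose j : R) * (-x) ^ j := by
    rw [sum_range_choose_mul_eq_of_lt _ (mem_range.mp hk), sub_eq_neg_add, add_pow]
    exact sum_congr rfl fun j _ => by ring
  calc ∑ k ∈ range (m + 1), (m.choose k : R) ^ 2 * (1 - x) ^ k
      = ∑ k ∈ range (m + 1), ∑ j ∈ range (m + 1),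
          (m.choose k : R) ^ 2 * ((k.choose j : R) * (-x) ^ j) :=
        sum_congr rfl fun k hk => by rw [expand k hk, mul_sum]
    _ = ∑ j ∈ range (m + 1),
          ((∑ k ∈ range (m + 1), m.choose k ^ 2 * k.choose j : ℕ) : R) * (-x) ^ j := by
        rw [sum_comm]
        refine sum_congr rfl fun j _ => ?_
        push_cast
        rw [sum_mul]
        exact sum_congr rfl fun k _ => by ring
    _ = _ := by
        simp_rw [sum_range_choose_sq_mul_choose]
        push_cast
        rfl

theorem natCast_descFactorial_eq_neg_one_pow_mul {R : Type*} [CommRing R] {N n : ℕ}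
    (h : (N : R) + n + 1 = 0) (k : ℕ) :
    (N.descFactorial k : R) = (-1) ^ k * (n + k).descFactorial k := by
  have hN : -(N : R) = ((n + 1 : ℕ) : R) := by push_cast; linear_combination -h
  have := ascPochhammer_eval_neg_eq_descPochhammer R (N : R) k
  rw [hN, ← ascPochhammer_eval_cast, ascPochhammer_nat_eq_ascFactorial,
    ← Nat.add_descFactorial_eq_ascFactorial, descPochhammer_eval_eq_descFactorial] at this
  rw [this, ← mul_assoc, ← mul_pow]
  simp

theorem natCast_factorial_ne_zero_of_lt {p k : ℕ} [Fact p.Prime] (hk : k < p) :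
    (k.factorial : ZMod p) ≠ 0 := by
  rw [Ne, ZMod.natCast_eq_zero_iff, (Fact.out : p.Prime).dvd_factorial]
  omega

theorem natCast_choose_eq_neg_one_pow_mul {p : ℕ} [Fact p.Prime] {N n k : ℕ} (hk : k < p)
    (h : p ∣ N + n + 1) : (N.choose k : ZMod p) = (-1) ^ k * (n + k).choose k := by
  have hdesc := natCast_descFactorial_eq_neg_one_pow_mul (R := ZMod p) (N := N) (n := n)
    (by exact_mod_cast (ZMod.natCast_eq_zero_iff _ _).mpr h) k
  rw [Nat.descFactorial_eq_factorial_mul_choose, Nat.descFactorial_eq_factorial_mul_choose] at hdesc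
  push_cast at hdesc
  apply mul_left_cancel₀ (natCast_factorial_ne_zero_of_lt hk)
  linear_combination hdesc

theorem natCast_choose_add_sub_eq_neg_one_pow_mul {p m : ℕ} [Fact p.Prime] (hp : p = 2 * m + 1)
    {j : ℕ} (hj : j ≤ m) : ((m + (m - j)).choose m : ZMod p) = (-1) ^ (m - j) * m.choose j := by
  rw [Nat.choose_symm_add, natCast_choose_eq_neg_one_pow_mul (n := j) (by omega) ⟨1, by omega⟩,
    Nat.add_sub_cancel' hj, Nat.choose_symm hj]

theorem sum_range_choose_sq_mul_one_sub_pow_of_eq_two_mul_add_one {p m : ℕ} [Fact p.Prime]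
    (hp : p = 2 * m + 1) (x : ZMod p) :
    ∑ k ∈ range (m + 1), (m.choose k : ZMod p) ^ 2 * (1 - x) ^ k =
      (-1) ^ m * ∑ k ∈ range (m + 1), (m.choose k : ZMod p) ^ 2 * x ^ k := by
  rw [sum_range_choose_sq_mul_one_sub_pow, mul_sum]
  refine sum_congr rfl fun j hj => ?_
  have hjm : j ≤ m := Nat.lt_succ_iff.mp (mem_range.mp hj)
  have hsign : (-1 : ZMod p) ^ (m - j) * (-1) ^ j = (-1) ^ m := by
    rw [← pow_add, Nat.sub_add_cancel hjm]
  rw [natCast_choose_add_sub_eq_neg_one_pow_mul hp hjm, neg_pow x, ← hsign]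
  ring

namespace PadicInt

variable {p : ℕ} [Fact p.Prime]

theorem isUnit_iff_toZMod_ne_zero {x : ℤ_[p]} : IsUnit x ↔ toZMod x ≠ 0 := by
  rw [Ne, ← RingHom.mem_ker, ker_toZMod, IsLocalRing.mem_maximalIdeal, mem_nonunits_iff, not_not]

theorem isUnit_natCast_of_not_dvd {n : ℕ} (h : ¬p ∣ n) : IsUnit (n : ℤ_[p]) := by
  rwa [isUnit_iff_toZMod_ne_zero, map_natCast, Ne, ZMod.natCast_eq_zero_iff]

theorem exists_eq_mul_of_toZMod_eq_zero {x : ℤ_[p]} (h : toZMod x = 0) : ∃ t, x = p * t := by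
  rw [← RingHom.mem_ker, ker_toZMod, maximalIdeal_eq_span_p, Ideal.mem_span_singleton] at h
  exact h

end PadicInt

theorem map_ascPochhammer_eval {R S : Type*} [CommSemiring R] [CommSemiring S] (f : R →+* S)
    (k : ℕ) (a : R) : f ((ascPochhammer R k).eval a) = (ascPochhammer S k).eval (f a) := by
  rw [← ascPochhammer_map f, eval_map, eval₂_at_apply]

theorem map_ringInverse_of_isUnit {M₀ G₀ F : Type*} [MonoidWithZero M₀] [GroupWithZero G₀]
    [FunLike F M₀ G₀] [MonoidHomClass F M₀ G₀] (f : F) {a : M₀} (ha : IsUnit a) :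
    f (Ring.inverse a) = (f a)⁻¹ := by
  obtain ⟨u, rfl⟩ := ha
  rw [Ring.inverse_unit, map_units_inv]

/-- `(1/2)_k / k!` as a `p`-adic integer. For `p = 2` or `k ≥ p` the `Ring.inverse`s are junk. -/
noncomputable def halfPochhammerCoeff (p : ℕ) [Fact p.Prime] (k : ℕ) : ℤ_[p] :=
  (ascPochhammer ℤ_[p] k).eval (Ring.inverse 2) * Ring.inverse (k.factorial : ℤ_[p])

section halfPochhammerCoeff

variable {p k : ℕ} [Fact p.Prime]

theorem map_halfPochhammerCoeff {K : Type*} [Field K] (f : ℤ_[p] →+* K) (hp : p ≠ 2)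
    (hk : k < p) :
    f (halfPochhammerCoeff p k) = (ascPochhammer K k).eval 2⁻¹ / k.factorial := by
  have hp' : p.Prime := Fact.out
  have h2 : IsUnit (2 : ℤ_[p]) := by
    exact_mod_cast PadicInt.isUnit_natCast_of_not_dvd
      fun h => hp ((Nat.prime_dvd_prime_iff_eq hp' Nat.prime_two).mp h)
  have hfact : IsUnit (k.factorial : ℤ_[p]) :=
    PadicInt.isUnit_natCast_of_not_dvd fun h => by rw [hp'.dvd_factorial] at h; omega
  rw [halfPochhammerCoeff, map_mul, map_ascPochhammer_eval,
    map_ringInverse_of_isUnit f h2, map_ringInverse_of_isUnit f hfact,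
    map_ofNat, map_natCast, div_eq_mul_inv]

theorem coe_halfPochhammerCoeff (hp : p ≠ 2) (hk : k < p) :
    (halfPochhammerCoeff p k : ℚ_[p]) =
      (((ascPochhammer ℚ k).eval (1 / 2) / k.factorial : ℚ) : ℚ_[p]) := by
  refine (map_halfPochhammerCoeff PadicInt.Coe.ringHom hp hk).trans ?_
  rw [Rat.cast_div, Rat.cast_natCast, ← Rat.coe_castHom, map_ascPochhammer_eval]
  simp

theorem toZMod_halfPochhammerCoeff {m : ℕ} (hp : p = 2 * m + 1) (hk : k < p) :
    PadicInt.toZMod (halfPochhammerCoeff p k) = (-1) ^ k * m.choose k := by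
  have hhalf : (2 : ZMod p)⁻¹ = -m := by
    have : ((2 * m + 1 : ℕ) : ZMod p) = 0 := by rw [← hp, ZMod.natCast_self]
    push_cast at this
    rw [inv_eq_of_mul_eq_one_right]
    linear_combination -this
  rw [map_halfPochhammerCoeff _ (by omega) hk, hhalf, ascPochhammer_eval_neg_eq_descPochhammer,
    descPochhammer_eval_eq_descFactorial, Nat.descFactorial_eq_factorial_mul_choose, Nat.cast_mul]
  field_simp [natCast_factorial_ne_zero_of_lt hk]

end halfPochhammerCoeff

theorem sum_range_toZMod_halfPochhammerCoeff_sq_mul {p m : ℕ} [Fact p.Prime]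
    (hp : p = 2 * m + 1) (x : ZMod p) :
    ∑ k ∈ range p, PadicInt.toZMod (halfPochhammerCoeff p k) ^ 2 * x ^ k =
      ∑ k ∈ range (m + 1), (m.choose k : ZMod p) ^ 2 * x ^ k := by
  calc ∑ k ∈ range p, PadicInt.toZMod (halfPochhammerCoeff p k) ^ 2 * x ^ k
      = ∑ k ∈ range p, (m.choose k : ZMod p) * (m.choose k * x ^ k) :=
        sum_congr rfl fun k hk => by
          rw [toZMod_halfPochhammerCoeff hp (mem_range.mp hk), mul_pow, ← pow_mul, pow_mul',
            neg_one_sq, one_pow]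
          ring
    _ = ∑ k ∈ range (m + 1), (m.choose k : ZMod p) ^ 2 * x ^ k := by
        rw [sum_range_choose_mul_eq_of_lt _ (by omega)]
        exact sum_congr rfl fun k _ => by ring

theorem quadratic_character_symmetry (p : ℕ) [Fact p.Prime] (hp : 2 < p)
    (z : ℚ) (hz : ‖(z : ℚ_[p])‖ ≤ 1) :
    ∃ t : ℤ_[p],
      (((-1 : ℚ)^((p - 1) / 2) *
            ∑ k ∈ Finset.range p,
              ((ascPochhammer ℚ k).eval (1 / 2 : ℚ))^2 / (k.factorial : ℚ)^2 * z^k -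
          ∑ k ∈ Finset.range p,
            ((ascPochhammer ℚ k).eval (1 / 2 : ℚ))^2 / (k.factorial : ℚ)^2 * (1 - z)^k : ℚ) : ℚ_[p]) =
        (p : ℚ_[p]) * (t : ℚ_[p]) := by
  obtain ⟨m, hm⟩ := (Fact.out : p.Prime).odd_of_ne_two hp.ne'
  set c := halfPochhammerCoeff p
  let zI : ℤ_[p] := ⟨z, hz⟩
  obtain ⟨t, ht⟩ := PadicInt.exists_eq_mul_of_toZMod_eq_zero
    (x := (-1) ^ m * ∑ k ∈ range p, c k ^ 2 * zI ^ k - ∑ k ∈ range p, c k ^ 2 * (1 - zI) ^ k) (by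
      simp only [map_sub, map_mul, map_sum, map_pow, map_neg, map_one]
      rw [sum_range_toZMod_halfPochhammerCoeff_sq_mul hm,
        sum_range_toZMod_halfPochhammerCoeff_sq_mul hm,
        sum_range_choose_sq_mul_one_sub_pow_of_eq_two_mul_add_one hm, sub_self])
  have hcoe (k : ℕ) (hk : k ∈ range p) (w : ℚ_[p]) : (c k : ℚ_[p]) ^ 2 * w =
      (((ascPochhammer ℚ k).eval (1 / 2) : ℚ) : ℚ_[p]) ^ 2 / (k.factorial : ℚ_[p]) ^ 2 * w := by
    rw [coe_halfPochhammerCoeff hp.ne' (mem_range.mp hk)]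
    push_cast
    ring
  refine ⟨t, ?_⟩
  rw [← PadicInt.coe_natCast, ← PadicInt.coe_mul, ← ht, show (p - 1) / 2 = m by omega]
  simp only [PadicInt.coe_sub, PadicInt.coe_mul, PadicInt.coe_pow, PadicInt.coe_sum,
    PadicInt.coe_one]
  rw [sum_congr rfl fun k hk => hcoe k hk _, sum_congr rfl fun k hk => hcoe k hk _]
  push_cast
  rfl
end
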